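/- arXiv:2409.14933 — 2 statements merged into one kernel-verified Lean document; each statement's English description precedes it below -/
import Mathlib

section
/- With notation as in the context, η_λ = 𝒪 if and only if e ∈ T (as a subset of T_E); equivalently, η_λ ≠ 𝒪 if and only if the idempotent e does not lie in T. -/
/-!
`T_E` is reduced and `e` lies in every prime of `T_E` except the maximal ideal `ker λ_E`. Checking
prime by prime, `e` kills `ker λ_E`, and any element that kills `ker λ_E` and is congruent to `e`
modulo it equals `e`. As `ker λ_E` is the localization of `ker λ`, an element `t ∈ T` with
`λ t = 1` lies in `Ann_T(ker λ)` exactly when it kills `ker λ_E`, that is, exactly when `t = e`.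
-/

open scoped nonZeroDivisors

theorem Ideal.map_mem_annihilator_map {R S : Type*} [CommRing R] [CommRing S] (f : R →+* S)
    {I : Ideal R} {t : R} (ht : t ∈ I.annihilator) : f t ∈ (I.map f).annihilator := by
  rw [Ideal.map, Submodule.mem_annihilator_span]
  rintro ⟨_, x, hx, rfl⟩
  rw [smul_eq_mul, ← map_mul, ← smul_eq_mul, Submodule.mem_annihilator.mp ht x hx, map_zero]

theorem IsLocalization.isReduced {R : Type*} [CommRing R] [IsReduced R] (M : Submonoid R)
    (S : Type*) [CommRing S] [Algebra R S] [IsLocalization M S] : IsReduced S :=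
  isReduced_of_injective (IsLocalization.algEquiv M S (Localization M)) (AlgEquiv.injective _)

theorem Algebra.algebraMapSubmonoid_le_nonZeroDivisors_of_flat (R A : Type*) [CommRing R]
    [CommRing A] [Algebra R A] [Module.Flat R A] : algebraMapSubmonoid A R⁰ ≤ A⁰ := by
  rintro _ ⟨r, hr, rfl⟩
  refine mem_nonZeroDivisors_iff_right.mpr fun a ha => ?_
  rw [mul_comm, ← Algebra.smul_def] at ha
  exact (Module.Flat.isSMulRegular_of_nonZeroDivisors hr).right_eq_zero_of_smul ha

section SupportedAtMaximalIdeal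

variable {R : Type*} [CommRing R] [IsReduced R] {M : Ideal R} {e : R}

theorem eq_zero_of_forall_mem_isPrime {x : R} (h : ∀ P : Ideal R, P.IsPrime → x ∈ P) :
    x = 0 := by
  have hx : x ∈ nilradical R := by
    rw [nilradical_eq_sInf]
    exact Ideal.mem_sInf.mpr fun P hP => h P hP
  rwa [nilradical_eq_zero] at hx

theorem mul_eq_zero_of_mem_of_forall_isPrime_ne
    (he : ∀ P : Ideal R, P.IsPrime → P ≠ M → e ∈ P) {x : R} (hx : x ∈ M) : e * x = 0 :=
  eq_zero_of_forall_mem_isPrime fun P hP => by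
    by_cases hPM : P = M
    · exact P.mul_mem_left e (hPM ▸ hx)
    · exact P.mul_mem_right x (he P hP hPM)

theorem eq_of_mem_annihilator_of_sub_mem [M.IsMaximal]
    (he : ∀ P : Ideal R, P.IsPrime → P ≠ M → e ∈ P) {x : R} (hx : x ∈ M.annihilator)
    (hxe : x - e ∈ M) : x = e := by
  refine sub_eq_zero.mp (eq_zero_of_forall_mem_isPrime fun P hP => ?_)
  by_cases hPM : P = M
  · exact hPM ▸ hxe
  obtain ⟨z, hzM, hzP⟩ : ∃ z ∈ M, z ∉ P := by
    by_contra! hMP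
    exact hPM (Ideal.IsMaximal.eq_of_le ‹_› hP.ne_top hMP).symm
  have hxz : x * z ∈ P := by
    rw [← smul_eq_mul, Submodule.mem_annihilator.mp hx z hzM]
    exact P.zero_mem
  exact P.sub_mem ((hP.mem_or_mem hxz).resolve_right hzP) (he P hP hPM)

end SupportedAtMaximalIdeal

theorem statement5_general
    {O : Type*} [CommRing O]
    {E : Type*} [Field E] [Algebra O E] [IsFractionRing O E]
    {T : Type*} [CommRing T] [IsReduced T]
    [Algebra O T] [Module.Flat O T]
    {TE : Type*} [CommRing TE] [Algebra T TE] [Algebra E TE]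
    [IsLocalization (Algebra.algebraMapSubmonoid T (nonZeroDivisors O)) TE]
    (lam : T →ₐ[O] O)
    (lamE : TE →ₐ[E] E) (e : TE)
    (hlamE : ∀ t : T, lamE (algebraMap T TE t) = algebraMap O E (lam t))
    (he1 : lamE e = 1)
    (he2 : ∀ P : Ideal TE, P.IsPrime → P ≠ RingHom.ker lamE → e ∈ P) :
    Ideal.map lam (Submodule.annihilator (RingHom.ker lam)) = ⊤ ↔
      ∃ t : T, algebraMap T TE t = e := by
  have hinj : Function.Injective (algebraMap T TE) := IsLocalization.injective TE
    (Algebra.algebraMapSubmonoid_le_nonZeroDivisors_of_flat O T)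
  have : IsReduced TE := IsLocalization.isReduced (Algebra.algebraMapSubmonoid T O⁰) TE
  have : (RingHom.ker lamE).IsMaximal :=
    RingHom.ker_isMaximal_of_surjective lamE fun x => ⟨algebraMap E TE x, lamE.commutes x⟩
  have hcomap : (RingHom.ker lamE).comap (algebraMap T TE) = RingHom.ker lam := by
    ext t
    simp [hlamE]
  have hker : RingHom.ker lamE = (RingHom.ker lam).map (algebraMap T TE) := by
    rw [← hcomap]
    exact (IsLocalization.map_under (Algebra.algebraMapSubmonoid T O⁰) TE _).symm
  constructor
  · intro htop
    obtain ⟨t, ht, hlt⟩ := (Ideal.mem_map_iff_of_surjective lam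
      fun x => ⟨algebraMap O T x, lam.commutes x⟩).mp
      (htop ▸ Submodule.mem_top (x := 1))
    refine ⟨t, eq_of_mem_annihilator_of_sub_mem he2 ?_ ?_⟩
    · exact hker ▸ Ideal.map_mem_annihilator_map (algebraMap T TE) ht
    · rw [RingHom.mem_ker, map_sub, hlamE, hlt, he1, map_one, sub_self]
  · rintro ⟨t, rfl⟩
    have hlt : lam t = 1 := IsFractionRing.injective O E (by rw [← hlamE, he1, map_one])
    have ht : t ∈ (RingHom.ker lam).annihilator :=
      Submodule.mem_annihilator.mpr fun n hn => hinj <| by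
        rw [smul_eq_mul, map_mul, map_zero]
        exact mul_eq_zero_of_mem_of_forall_isPrime_ne he2 (hcomap ▸ hn : n ∈ _)
    rw [Ideal.eq_top_iff_one, ← hlt]
    exact Ideal.mem_map_of_mem lam ht

/-- With `𝒪` a complete DVR with fraction field `E`, `T` a commutative
reduced finite flat local `𝒪`-algebra, `λ : T → 𝒪` an `𝒪`-algebra homomorphism,
`T_E = T ⊗_𝒪 E` and `e ∈ T_E` the idempotent attached to `λ`:
`η_λ = λ(Ann_T(ker λ))` equals `𝒪` if and only if `e` lies in (the image of) `T`. -/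
theorem statement5
    {O : Type*} [CommRing O] [IsDomain O] [IsDiscreteValuationRing O]
    [IsAdicComplete (IsLocalRing.maximalIdeal O) O]
    {E : Type*} [Field E] [Algebra O E] [IsFractionRing O E]
    {T : Type*} [CommRing T] [IsReduced T] [IsLocalRing T]
    [Algebra O T] [Module.Finite O T] [Module.Flat O T]
    {TE : Type*} [CommRing TE] [Algebra T TE] [Algebra O TE] [Algebra E TE]
    [IsScalarTower O T TE] [IsScalarTower O E TE]
    [IsLocalization (Algebra.algebraMapSubmonoid T (nonZeroDivisors O)) TE]
    (lam : T →ₐ[O] O)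
    (lamE : TE →ₐ[E] E) (e : TE)
    (hlamE : ∀ t : T, lamE (algebraMap T TE t) = algebraMap O E (lam t))
    (he1 : lamE e = 1)
    (he2 : ∀ P : Ideal TE, P.IsPrime → P ≠ RingHom.ker lamE → e ∈ P) :
    Ideal.map lam (Submodule.annihilator (RingHom.ker lam)) = ⊤ ↔
      ∃ t : T, algebraMap T TE t = e :=
  statement5_general lam lamE e hlamE he1 he2
end

section
/- With notation as in the context, suppose additionally that M₁[ker λ] and M₂[ker λ̃] are both free 𝒪-modules of rank 1, with bases δ₁ and δ₂ respectively. Then η_λ(M₁) = η_{λ̃}(M₂) = ([δ₁, δ₂]), the 𝒪-ideal generated by [δ₁, δ₂]. -/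
/-- The 0-th Fitting ideal of a module `N` over a commutative ring `R`. -/
def fittingIdeal (R : Type*) [CommRing R] (N : Type*) [AddCommGroup N] [Module R N] :
    Ideal R :=
  Ideal.span { r : R | ∃ (n : ℕ) (π : (Fin n → R) →ₗ[R] N) (_ : Function.Surjective π)
    (A : Matrix (Fin n) (Fin n) R), (∀ j, π (fun i => A i j) = 0) ∧ r = A.det }

/-- The `𝒪`-submodule `e·M` of `M_E`. -/
noncomputable def eMsub {O TE M ME : Type*} [CommRing O] [CommRing TE] [Algebra O TE]
    [AddCommGroup M] [Module O M] [AddCommGroup ME] [Module O ME] [Module TE ME]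
    [IsScalarTower O TE ME] (e : TE) (iota : M →ₗ[O] ME) : Submodule O ME :=
  Submodule.span O {x : ME | ∃ m : M, x = e • iota m}

/-- The congruence module `C₀^λ(M) = e·M/(e·M ∩ M)`, formed inside `M_E`. -/
noncomputable abbrev C0M {O TE M ME : Type*} [CommRing O] [CommRing TE] [Algebra O TE]
    [AddCommGroup M] [Module O M] [AddCommGroup ME] [Module O ME] [Module TE ME]
    [IsScalarTower O TE ME] (e : TE) (iota : M →ₗ[O] ME) :=
  ↥(eMsub e iota) ⧸
    (Submodule.comap (eMsub e iota).subtype (eMsub e iota ⊓ LinearMap.range iota))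

/-- The class of `e·m` in `C₀^λ(M)`. -/
noncomputable def clsM {O TE M ME : Type*} [CommRing O] [CommRing TE] [Algebra O TE]
    [AddCommGroup M] [Module O M] [AddCommGroup ME] [Module O ME] [Module TE ME]
    [IsScalarTower O TE ME] (e : TE) (iota : M →ₗ[O] ME) (m : M) : C0M e iota :=
  Submodule.Quotient.mk ⟨e • iota m, Submodule.subset_span ⟨m, rfl⟩⟩

/-!
Since `T_E` is reduced and `e` lies in every prime except `ker λ_E`, the ideal `ker λ` kills
`e·M₁`; hence `e·M₁` lies on the line `E·δ₁`, and `e·M₁ ∩ M₁ = M₁[ker λ] = 𝒪·δ₁`.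
As `ẽ·δ₂ = δ₂`, orthogonality gives `[e·m, δ₂] = [m, δ₂] ∈ 𝒪`. The element `δ₂` is not
divisible by `ϖ` (that would put `δ₂/ϖ` in `M₂[ker λ̃] = 𝒪·δ₂`), so it has a unit coordinate
in a basis of `M₂`, and by perfectness `[m₁, δ₂] = 1` for some `m₁`. Thus `x ↦ [x, δ₂]` is an
isomorphism `e·M₁ ≅ 𝒪` carrying `𝒪·δ₁` onto `([δ₁, δ₂])`, so `C₀^λ(M₁) ≅ 𝒪/([δ₁, δ₂])`,
whose Fitting ideal is `([δ₁, δ₂])`. Exchanging the roles of `M₁` and `M₂` gives the same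
for `M₂`.
-/

open Submodule

section FittingIdeal

variable {R : Type*} [CommRing R] {N N' : Type*} [AddCommGroup N] [Module R N]
  [AddCommGroup N'] [Module R N']

lemma fittingIdeal_le_of_surjective (f : N →ₗ[R] N') (hf : Function.Surjective f) :
    fittingIdeal R N ≤ fittingIdeal R N' := by
  rw [fittingIdeal, Ideal.span_le]
  rintro r ⟨n, π, hπ, A, hA, rfl⟩
  exact Ideal.subset_span ⟨n, f ∘ₗ π, hf.comp hπ, A, fun j => by simp [hA j], rfl⟩

lemma fittingIdeal_congr (u : N ≃ₗ[R] N') : fittingIdeal R N = fittingIdeal R N' :=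
  le_antisymm (fittingIdeal_le_of_surjective u.toLinearMap u.surjective)
    (fittingIdeal_le_of_surjective u.symm.toLinearMap u.symm.surjective)

lemma fittingIdeal_le_annihilator : fittingIdeal R N ≤ Module.annihilator R N := by
  rw [fittingIdeal, Ideal.span_le]
  rintro r ⟨n, π, hπ, A, hA, rfl⟩
  rw [SetLike.mem_coe, Module.mem_annihilator]
  intro x
  obtain ⟨y, rfl⟩ := hπ x
  -- `det A • y = A *ᵥ (adj A *ᵥ y)` is a combination of the columns of `A`, all killed by `π`.
  have hcols : A.det • y = ∑ j, A.adjugate.mulVec y j • fun i => A i j :=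
    calc A.det • y = A.mulVec (A.adjugate.mulVec y) := by
          rw [Matrix.mulVec_mulVec, Matrix.mul_adjugate, Matrix.smul_mulVec, Matrix.one_mulVec]
      _ = _ := by
          funext i
          simp [Matrix.mulVec, dotProduct, Finset.sum_apply, mul_comm]
  rw [← map_smul, hcols, map_sum]
  exact Finset.sum_eq_zero fun j _ => by rw [map_smul, hA j, smul_zero]

lemma fittingIdeal_quotient_span_singleton (a : R) :
    fittingIdeal R (R ⧸ (Ideal.span {a} : Submodule R R)) = Ideal.span {a} := by
  refine le_antisymm (fun r hr => ?_) ?_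
  · have := Module.mem_annihilator.mp (fittingIdeal_le_annihilator hr)
      (Submodule.Quotient.mk (1 : R))
    rwa [← Submodule.Quotient.mk_smul, Submodule.Quotient.mk_eq_zero, smul_eq_mul,
      mul_one] at this
  · rw [Ideal.span_le, Set.singleton_subset_iff]
    refine Ideal.subset_span ⟨1, (Ideal.span {a} : Submodule R R).mkQ ∘ₗ LinearMap.proj 0,
      (Submodule.mkQ_surjective _).comp fun x => ⟨fun _ => x, rfl⟩,
      Matrix.of fun _ _ => a, fun j => by simp, by simp⟩

lemma fittingIdeal_quotient_span_singleton_of_equiv (Ψ : N ≃ₗ[R] R) (x : N) :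
    fittingIdeal R (N ⧸ R ∙ x) = Ideal.span {Ψ x} := by
  have hmap : (R ∙ x).map (Ψ : N →ₗ[R] R) = Ideal.span {Ψ x} := by
    rw [Submodule.map_span, Set.image_singleton]
    rfl
  rw [fittingIdeal_congr (Submodule.Quotient.equiv _ _ Ψ hmap),
    fittingIdeal_quotient_span_singleton]

end FittingIdeal

lemma AlgHom.mul_eq_smul_of_forall_prime_ne_ker {E A : Type*} [CommRing E] [CommRing A]
    [Algebra E A] [IsReduced A] (φ : A →ₐ[E] E) {e : A} (he1 : φ e = 1)
    (he2 : ∀ P : Ideal A, P.IsPrime → P ≠ RingHom.ker φ → e ∈ P) (a : A) :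
    a * e = φ a • e := by
  have hnil : (a - algebraMap E A (φ a)) * e ∈ nilradical A := by
    rw [nilradical_eq_sInf, Ideal.mem_sInf]
    intro P hP
    by_cases hPk : P = RingHom.ker φ
    · simp [hPk, he1]
    · exact P.mul_mem_left _ (he2 P hP hPk)
  rw [Algebra.smul_def, ← sub_eq_zero, ← sub_mul]
  exact (mem_nilradical.mp hnil).eq_zero

lemma Submodule.exists_linearEquiv_of_le_span_singleton {O E ME : Type*} [CommRing O] [Field E]
    [Algebra O E] [IsFractionRing O E] [AddCommGroup ME] [Module O ME] [Module E ME]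
    [IsScalarTower O E ME] {N : Submodule O ME} {v : ME} (hN : N ≤ (E ∙ v).restrictScalars O)
    (φ : ME →ₗ[E] E) (hφN : N.map (φ.restrictScalars O) ≤ LinearMap.range (Algebra.linearMap O E))
    {x₁ : N} (hx₁ : φ x₁ = 1) :
    ∃ Ψ : N ≃ₗ[O] O, ∀ x, algebraMap O E (Ψ x) = φ x := by
  have hinj : Function.Injective (Algebra.linearMap O E) := IsFractionRing.injective O E
  let ψ : N →ₗ[O] O := (LinearEquiv.ofInjective _ hinj).symm.toLinearMap ∘ₗ
    LinearMap.codRestrict _ ((φ.restrictScalars O).domRestrict N)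
      fun x => hφN ⟨x, x.2, rfl⟩
  have hψ : ∀ x, algebraMap O E (ψ x) = φ x := fun x =>
    congrArg Subtype.val ((LinearEquiv.ofInjective _ hinj).apply_symm_apply _)
  have hψx₁ : ψ x₁ = 1 := IsFractionRing.injective O E (by rw [hψ, hx₁, map_one])
  have hφv : φ v ≠ 0 := by
    obtain ⟨β, hβ⟩ := Submodule.mem_span_singleton.mp (hN x₁.2)
    rw [← hβ, map_smul, smul_eq_mul] at hx₁
    exact right_ne_zero_of_mul_eq_one hx₁
  refine ⟨LinearEquiv.ofBijective ψ ⟨?_, fun o => ⟨o • x₁, ?_⟩⟩, hψ⟩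
  · rw [injective_iff_map_eq_zero]
    intro x hx
    obtain ⟨α, hα⟩ := Submodule.mem_span_singleton.mp (hN x.2)
    have hφx := hψ x
    rw [hx, map_zero, ← hα, map_smul, smul_eq_mul, eq_comm, mul_eq_zero] at hφx
    rw [← Submodule.coe_eq_zero, ← hα, hφx.resolve_right hφv, zero_smul]
  · rw [map_smul, hψx₁, smul_eq_mul, mul_one]

lemma Module.Free.exists_dual_apply_eq_one_of_forall_smul_ne {O M : Type*} [CommRing O]
    [IsDomain O] [IsDiscreteValuationRing O] [AddCommGroup M] [Module O M] [Module.Free O M]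
    {ϖ : O} (hϖ : Irreducible ϖ) {x : M} (hx : ∀ y : M, ϖ • y ≠ x) :
    ∃ f : Module.Dual O M, f x = 1 := by
  let b := Module.Free.chooseBasis O M
  by_contra! h
  have hdvd : ∀ i, ϖ ∣ b.repr x i := by
    intro i
    rw [← Ideal.mem_span_singleton, ← hϖ.maximalIdeal_eq, IsLocalRing.mem_maximalIdeal,
      mem_nonunits_iff]
    rintro ⟨u, hu⟩
    exact h (u⁻¹.val • b.coord i) (by simp [← hu])
  choose u hu using hdvd
  refine hx (∑ i ∈ (b.repr x).support, u i • b i) ?_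
  conv_rhs => rw [← b.linearCombination_repr x, Finsupp.linearCombination_apply, Finsupp.sum]
  rw [Finset.smul_sum]
  exact Finset.sum_congr rfl fun i _ => by rw [smul_smul, ← hu i]

section TorsionBySet

variable {O T M : Type*} [CommRing O] [IsDomain O] [CommRing T] [Algebra O T]
  [AddCommGroup M] [Module O M] [Module T M] [IsScalarTower O T M] {s : Set T} {δ : M}

lemma smul_ne_of_mem_torsionBySet [Module.IsTorsionFree O M] (hδ : δ ∈ torsionBySet T M s)
    (hbasis : ∀ m ∈ torsionBySet T M s, ∃! c : O, m = c • δ) {ϖ : O} (hϖ : Irreducible ϖ)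
    (y : M) : ϖ • y ≠ δ := by
  intro hy
  have hy_mem : y ∈ torsionBySet T M s := by
    rw [mem_torsionBySet_iff] at hδ ⊢
    intro a
    have := hδ a
    rwa [← hy, smul_comm, smul_eq_zero_iff_right hϖ.ne_zero] at this
  obtain ⟨c, hc, -⟩ := hbasis y hy_mem
  have : ϖ * c = 1 :=
    (hbasis δ hδ).unique (by rw [mul_smul, ← hc, hy]) (one_smul O δ).symm
  exact hϖ.not_isUnit (IsUnit.of_mul_eq_one c this)

lemma exists_dual_apply_eq_one_of_mem_torsionBySet [IsDiscreteValuationRing O] [Module.Free O M]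
    (hδ : δ ∈ torsionBySet T M s) (hbasis : ∀ m ∈ torsionBySet T M s, ∃! c : O, m = c • δ) :
    ∃ f : Module.Dual O M, f δ = 1 := by
  obtain ⟨ϖ, hϖ⟩ := IsDiscreteValuationRing.exists_irreducible O
  exact Module.Free.exists_dual_apply_eq_one_of_forall_smul_ne hϖ
    (smul_ne_of_mem_torsionBySet hδ hbasis hϖ)

end TorsionBySet

lemma IsLocalizedModule.injective_of_isTorsionFree {O M M' : Type*} [CommRing O] [IsDomain O]
    [AddCommGroup M] [Module O M] [Module.IsTorsionFree O M] [AddCommGroup M'] [Module O M']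
    (f : M →ₗ[O] M') [IsLocalizedModule (nonZeroDivisors O) f] : Function.Injective f :=
  (IsLocalizedModule.injective_iff_isRegular _ f).mpr fun c =>
    IsSMulRegular.of_ne_zero (nonZeroDivisors.coe_ne_zero c)

lemma mem_torsionBySet_ker_iff {O T M : Type*} [CommRing O] [CommRing T] [Algebra O T]
    [AddCommGroup M] [Module T M] (lam : T →ₐ[O] O) (m : M) :
    m ∈ torsionBySet T M (RingHom.ker lam) ↔ ∀ t, lam t = 0 → t • m = 0 := by
  simp [mem_torsionBySet_iff]

lemma algebraMap_mul_eq_zero_of_lam_eq_zero {O E T TE : Type*} [CommRing O] [Field E]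
    [Algebra O E] [CommRing T] [IsReduced T] [Algebra O T] [CommRing TE] [Algebra T TE]
    [Algebra E TE] [IsLocalization (Algebra.algebraMapSubmonoid T (nonZeroDivisors O)) TE]
    {lam : T →ₐ[O] O} {lamE : TE →ₐ[E] E} {e : TE}
    (hlamE : ∀ t : T, lamE (algebraMap T TE t) = algebraMap O E (lam t)) (he1 : lamE e = 1)
    (he2 : ∀ P : Ideal TE, P.IsPrime → P ≠ RingHom.ker lamE → e ∈ P) {t : T} (ht : lam t = 0) :
    algebraMap T TE t * e = 0 := by
  let S := Algebra.algebraMapSubmonoid T (nonZeroDivisors O)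
  have : IsReduced TE :=
    isReduced_of_injective _ (IsLocalization.algEquiv S TE (Localization S)).injective
  rw [lamE.mul_eq_smul_of_forall_prime_ne_ker he1 he2, hlamE, ht, map_zero, zero_smul]

section CongruenceModule

variable {O : Type*} [CommRing O] {T : Type*} [CommRing T] [Algebra O T] {lam : T →ₐ[O] O}
  {TE : Type*} [CommRing TE] [Algebra T TE] [Algebra O TE] {e : TE}
  {M : Type*} [AddCommGroup M] [Module O M]
  {ME : Type*} [AddCommGroup ME] [Module O ME] [Module TE ME] [IsScalarTower O TE ME]
  {iota : M →ₗ[O] ME}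

lemma algebraMap_smul_eq_zero_of_mem_eMsub
    (hker : ∀ t : T, lam t = 0 → algebraMap T TE t * e = 0) {t : T} (ht : lam t = 0)
    {x : ME} (hx : x ∈ eMsub e iota) : algebraMap T TE t • x = 0 := by
  induction hx using Submodule.span_induction with
  | mem y hy =>
    obtain ⟨m, rfl⟩ := hy
    rw [smul_smul, hker t ht, zero_smul]
  | zero => exact smul_zero _
  | add y z _ _ hy hz => rw [smul_add, hy, hz, add_zero]
  | smul o y _ hy => rw [smul_comm, hy, smul_zero]

variable [IsDomain O] [Module T M]

lemma mem_torsionBySet_of_iota_mem_eMsub [Module.IsTorsionFree O M]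
    [IsLocalizedModule (nonZeroDivisors O) iota]
    (hker : ∀ t : T, lam t = 0 → algebraMap T TE t * e = 0)
    (hiota : ∀ (t : T) (m : M), iota (t • m) = algebraMap T TE t • iota m)
    {m : M} (hm : iota m ∈ eMsub e iota) : m ∈ torsionBySet T M (RingHom.ker lam) := by
  refine (mem_torsionBySet_ker_iff lam m).mpr fun t ht => ?_
  apply IsLocalizedModule.injective_of_isTorsionFree iota
  rw [hiota, map_zero, algebraMap_smul_eq_zero_of_mem_eMsub hker ht hm]

lemma comap_subtype_eMsub_inf_range_eq [Module.IsTorsionFree O M]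
    [IsLocalizedModule (nonZeroDivisors O) iota]
    (hker : ∀ t : T, lam t = 0 → algebraMap T TE t * e = 0)
    (hiota : ∀ (t : T) (m : M), iota (t • m) = algebraMap T TE t • iota m) {δ : M}
    (hbasis : ∀ m ∈ torsionBySet T M (RingHom.ker lam), ∃! c : O, m = c • δ)
    (hδ : iota δ ∈ eMsub e iota) :
    (eMsub e iota ⊓ LinearMap.range iota).comap (eMsub e iota).subtype = O ∙ ⟨iota δ, hδ⟩ := by
  ext x
  rw [mem_comap, subtype_apply, mem_inf, mem_span_singleton]
  constructor
  · rintro ⟨-, m, hm⟩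
    obtain ⟨c, rfl, -⟩ := hbasis m (mem_torsionBySet_of_iota_mem_eMsub hker hiota (hm ▸ x.2))
    exact ⟨c, Subtype.ext (by simp [← hm])⟩
  · rintro ⟨c, rfl⟩
    exact ⟨(c • _ : eMsub e iota).2, c • δ, by simp⟩

lemma eMsub_le_span_singleton {E : Type*} [Field E] [Algebra O E] [IsFractionRing O E]
    [Module E ME] [IsScalarTower O E ME] [Module.IsTorsionFree O M]
    [IsLocalizedModule (nonZeroDivisors O) iota]
    (hker : ∀ t : T, lam t = 0 → algebraMap T TE t * e = 0)
    (hiota : ∀ (t : T) (m : M), iota (t • m) = algebraMap T TE t • iota m) {δ : M}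
    (hbasis : ∀ m ∈ torsionBySet T M (RingHom.ker lam), ∃! c : O, m = c • δ) :
    eMsub e iota ≤ (E ∙ iota δ).restrictScalars O := by
  rw [eMsub, Submodule.span_le]
  rintro _ ⟨m, rfl⟩
  obtain ⟨⟨m', s⟩, hs⟩ := IsLocalizedModule.surj (nonZeroDivisors O) iota (e • iota m)
  have hm' : iota m' ∈ eMsub e iota := hs ▸ Submodule.smul_mem _ _ (subset_span ⟨m, rfl⟩)
  obtain ⟨c, hc, -⟩ := hbasis m' (mem_torsionBySet_of_iota_mem_eMsub hker hiota hm')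
  have hs0 : algebraMap O E s ≠ 0 := IsFractionRing.to_map_ne_zero_of_mem_nonZeroDivisors s.2
  rw [SetLike.mem_coe, Submodule.restrictScalars_mem, ← Submodule.smul_mem_iff _ hs0,
    algebraMap_smul, ← Submonoid.smul_def, hs, hc, map_smul, ← algebraMap_smul E]
  exact Submodule.smul_mem _ _ (mem_span_singleton_self _)

lemma smul_iota_eq_self_of_mem_torsionBySet {E : Type*} [Field E] [Algebra O E]
    [IsFractionRing O E] [Algebra E TE] [IsScalarTower O T TE]
    [IsLocalization (Algebra.algebraMapSubmonoid T (nonZeroDivisors O)) TE]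
    [Module E ME] [IsScalarTower O E ME] {lamE : TE →ₐ[E] E}
    (hlamE : ∀ t : T, lamE (algebraMap T TE t) = algebraMap O E (lam t)) (he1 : lamE e = 1)
    (hiota : ∀ (t : T) (m : M), iota (t • m) = algebraMap T TE t • iota m)
    {m : M} (hm : m ∈ torsionBySet T M (RingHom.ker lam)) :
    e • iota m = iota m := by
  have : Module.IsTorsionFree O ME := .trans E
  -- `1 - e = t / s` with `λ t = 0`, and `t` kills `m`
  obtain ⟨⟨t, s⟩, hts⟩ :=
    IsLocalization.surj (Algebra.algebraMapSubmonoid T (nonZeroDivisors O)) (1 - e)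
  obtain ⟨o, ho, hos⟩ := s.2
  have ht : lam t = 0 := by
    have := congrArg lamE hts
    rw [map_mul, map_sub, map_one, he1, sub_self, zero_mul, hlamE, eq_comm] at this
    exact IsFractionRing.injective O E (this.trans (map_zero _).symm)
  have : o • (1 - e) • iota m = 0 :=
    calc o • (1 - e) • iota m = ((1 - e) * algebraMap T TE s) • iota m := by
          rw [← hos, ← IsScalarTower.algebraMap_apply, mul_smul, algebraMap_smul, smul_comm]
      _ = 0 := by
          rw [hts, ← hiota, (mem_torsionBySet_ker_iff lam m).mp hm t ht, map_zero]
  rwa [smul_eq_zero_iff_right (nonZeroDivisors.ne_zero ho), sub_smul, one_smul, sub_eq_zero,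
    eq_comm] at this

theorem fittingIdeal_C0M_eq_span_singleton {E : Type*} [Field E] [Algebra O E]
    [IsFractionRing O E] [IsReduced T] [Algebra E TE] [IsScalarTower O T TE]
    [IsLocalization (Algebra.algebraMapSubmonoid T (nonZeroDivisors O)) TE]
    [Module E ME] [IsScalarTower O E ME] [Module.IsTorsionFree O M]
    [IsLocalizedModule (nonZeroDivisors O) iota] {lamE : TE →ₐ[E] E}
    (hlamE : ∀ t : T, lamE (algebraMap T TE t) = algebraMap O E (lam t)) (he1 : lamE e = 1)
    (he2 : ∀ P : Ideal TE, P.IsPrime → P ≠ RingHom.ker lamE → e ∈ P)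
    (hiota : ∀ (t : T) (m : M), iota (t • m) = algebraMap T TE t • iota m) {δ : M}
    (hδ : δ ∈ torsionBySet T M (RingHom.ker lam))
    (hbasis : ∀ m ∈ torsionBySet T M (RingHom.ker lam), ∃! c : O, m = c • δ)
    (φ : ME →ₗ[E] E) (φ₀ : M →ₗ[O] O) (hφ : ∀ m, φ (iota m) = algebraMap O E (φ₀ m))
    (hφe : ∀ m, φ ((1 - e) • iota m) = 0) (hφ₀ : ∃ m, φ₀ m = 1) :
    fittingIdeal O (C0M e iota) = Ideal.span {φ₀ δ} := by
  have hker t (ht : lam t = 0) := algebraMap_mul_eq_zero_of_lam_eq_zero hlamE he1 he2 ht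
  have hδN : iota δ ∈ eMsub e iota :=
    smul_iota_eq_self_of_mem_torsionBySet hlamE he1 hiota hδ ▸ subset_span ⟨δ, rfl⟩
  have hφe' : ∀ m, φ (e • iota m) = algebraMap O E (φ₀ m) := fun m => by
    have := hφe m
    rwa [sub_smul, one_smul, map_sub, sub_eq_zero, hφ, eq_comm] at this
  have hφN : (eMsub e iota).map (φ.restrictScalars O) ≤
      LinearMap.range (Algebra.linearMap O E) := by
    rw [eMsub, Submodule.map_span_le]
    rintro _ ⟨m, rfl⟩
    exact ⟨φ₀ m, (hφe' m).symm⟩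
  obtain ⟨m₁, hm₁⟩ := hφ₀
  obtain ⟨Ψ, hΨ⟩ := Submodule.exists_linearEquiv_of_le_span_singleton
    (eMsub_le_span_singleton hker hiota hbasis) φ hφN
    (x₁ := ⟨e • iota m₁, subset_span ⟨m₁, rfl⟩⟩) (by simp [hφe', hm₁])
  unfold C0M
  rw [comap_subtype_eMsub_inf_range_eq hker hiota hbasis hδN,
    fittingIdeal_quotient_span_singleton_of_equiv Ψ]
  congr
  exact IsFractionRing.injective O E (by rw [hΨ, hφ])

end CongruenceModule

theorem statement11_general
    {O : Type*} [CommRing O] [IsDomain O] [IsDiscreteValuationRing O]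
    {E : Type*} [Field E] [Algebra O E] [IsFractionRing O E]
    {T : Type*} [CommRing T] [IsReduced T] [Algebra O T]
    (lam : T →ₐ[O] O)
    {TE : Type*} [CommRing TE] [Algebra T TE] [Algebra O TE] [Algebra E TE]
    [IsScalarTower O T TE]
    [IsLocalization (Algebra.algebraMapSubmonoid T (nonZeroDivisors O)) TE]
    (lamE : TE →ₐ[E] E) (e : TE)
    (hlamE : ∀ t : T, lamE (algebraMap T TE t) = algebraMap O E (lam t))
    (he1 : lamE e = 1)
    (he2 : ∀ P : Ideal TE, P.IsPrime → P ≠ RingHom.ker lamE → e ∈ P)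
    {T' : Type*} [CommRing T'] [IsReduced T'] [Algebra O T']
    (lam' : T' →ₐ[O] O)
    {TE' : Type*} [CommRing TE'] [Algebra T' TE'] [Algebra O TE'] [Algebra E TE']
    [IsScalarTower O T' TE']
    [IsLocalization (Algebra.algebraMapSubmonoid T' (nonZeroDivisors O)) TE']
    (lamE' : TE' →ₐ[E] E) (e' : TE')
    (hlamE' : ∀ t : T', lamE' (algebraMap T' TE' t) = algebraMap O E (lam' t))
    (he1' : lamE' e' = 1)
    (he2' : ∀ P : Ideal TE', P.IsPrime → P ≠ RingHom.ker lamE' → e' ∈ P)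
    {M₁ : Type*} [AddCommGroup M₁] [Module O M₁] [Module T M₁] [IsScalarTower O T M₁]
    [Module.Free O M₁]
    {ME₁ : Type*} [AddCommGroup ME₁] [Module O ME₁] [Module E ME₁] [Module TE ME₁]
    [IsScalarTower O TE ME₁] [IsScalarTower O E ME₁]
    (iota₁ : M₁ →ₗ[O] ME₁) [IsLocalizedModule (nonZeroDivisors O) iota₁]
    (hiota₁ : ∀ (t : T) (m : M₁), iota₁ (t • m) = algebraMap T TE t • iota₁ m)
    {M₂ : Type*} [AddCommGroup M₂] [Module O M₂] [Module T' M₂] [IsScalarTower O T' M₂]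
    [Module.Free O M₂]
    {ME₂ : Type*} [AddCommGroup ME₂] [Module O ME₂] [Module E ME₂] [Module TE' ME₂]
    [IsScalarTower O TE' ME₂] [IsScalarTower O E ME₂]
    (iota₂ : M₂ →ₗ[O] ME₂) [IsLocalizedModule (nonZeroDivisors O) iota₂]
    (hiota₂ : ∀ (t : T') (m : M₂), iota₂ (t • m) = algebraMap T' TE' t • iota₂ m)
    (B : M₁ →ₗ[O] M₂ →ₗ[O] O)
    (hB : Function.Bijective B) (hBf : Function.Bijective B.flip)
    (BE : ME₁ →ₗ[E] ME₂ →ₗ[E] E)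
    (hBE : ∀ (m : M₁) (m' : M₂), BE (iota₁ m) (iota₂ m') = algebraMap O E (B m m'))
    (horth₁ : ∀ (m : M₁) (m' : M₂), BE (e • iota₁ m) ((1 - e') • iota₂ m') = 0)
    (horth₂ : ∀ (m : M₁) (m' : M₂), BE ((1 - e) • iota₁ m) (e' • iota₂ m') = 0)
    (δ₁ : M₁) (δ₂ : M₂)
    (hδ₁ : ∀ t : T, lam t = 0 → t • δ₁ = 0)
    (hδ₁basis : ∀ m : M₁, (∀ t : T, lam t = 0 → t • m = 0) → ∃! c : O, m = c • δ₁)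
    (hδ₂ : ∀ t : T', lam' t = 0 → t • δ₂ = 0)
    (hδ₂basis : ∀ m : M₂, (∀ t : T', lam' t = 0 → t • m = 0) → ∃! c : O, m = c • δ₂) :
    fittingIdeal O (C0M e iota₁) = fittingIdeal O (C0M e' iota₂) ∧
    fittingIdeal O (C0M e iota₁) = Ideal.span {B δ₁ δ₂} := by
  have hδ₁' := (mem_torsionBySet_ker_iff lam δ₁).mpr hδ₁
  have hδ₂' := (mem_torsionBySet_ker_iff lam' δ₂).mpr hδ₂
  have hbasis₁ : ∀ m ∈ torsionBySet T M₁ (RingHom.ker lam), ∃! c : O, m = c • δ₁ :=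
    fun m hm => hδ₁basis m ((mem_torsionBySet_ker_iff lam m).mp hm)
  have hbasis₂ : ∀ m ∈ torsionBySet T' M₂ (RingHom.ker lam'), ∃! c : O, m = c • δ₂ :=
    fun m hm => hδ₂basis m ((mem_torsionBySet_ker_iff lam' m).mp hm)
  obtain ⟨f₁, hf₁⟩ := exists_dual_apply_eq_one_of_mem_torsionBySet hδ₁' hbasis₁
  obtain ⟨f₂, hf₂⟩ := exists_dual_apply_eq_one_of_mem_torsionBySet hδ₂' hbasis₂
  obtain ⟨m₁, rfl⟩ := hB.2 f₂
  obtain ⟨m₂, rfl⟩ := hBf.2 f₁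
  have hfix₁ := smul_iota_eq_self_of_mem_torsionBySet hlamE he1 hiota₁ hδ₁'
  have hfix₂ := smul_iota_eq_self_of_mem_torsionBySet hlamE' he1' hiota₂ hδ₂'
  have h₁ : fittingIdeal O (C0M e iota₁) = Ideal.span {B δ₁ δ₂} :=
    fittingIdeal_C0M_eq_span_singleton hlamE he1 he2 hiota₁ hδ₁' hbasis₁
      (BE.flip (iota₂ δ₂)) (B.flip δ₂) (fun m => hBE m δ₂)
      (fun m => by rw [LinearMap.flip_apply, ← hfix₂]; exact horth₂ m δ₂) ⟨m₁, hf₂⟩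
  have h₂ : fittingIdeal O (C0M e' iota₂) = Ideal.span {B δ₁ δ₂} :=
    fittingIdeal_C0M_eq_span_singleton hlamE' he1' he2' hiota₂ hδ₂' hbasis₂
      (BE (iota₁ δ₁)) (B δ₁) (hBE δ₁)
      (fun m => by rw [← hfix₁]; exact horth₁ δ₁ m) ⟨m₂, hf₁⟩
  exact ⟨h₁.trans h₂.symm, h₁⟩

/-- In the situation of the perfect-pairing setup (see Statement 10):
if moreover `M₁[ker λ]` and `M₂[ker λ̃]` are free `𝒪`-modules of rank 1 with bases
`δ₁`, `δ₂` (encoded by: `δᵢ` is killed by `ker λ` resp. `ker λ̃`, and every element so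
killed is `c • δᵢ` for a unique `c : 𝒪`), then
`η_λ(M₁) = η_{λ̃}(M₂) = ([δ₁, δ₂])`, the `𝒪`-ideal generated by `[δ₁, δ₂]`. -/
theorem statement11
    {O : Type*} [CommRing O] [IsDomain O] [IsDiscreteValuationRing O]
    [IsAdicComplete (IsLocalRing.maximalIdeal O) O]
    {E : Type*} [Field E] [Algebra O E] [IsFractionRing O E]
    {T : Type*} [CommRing T] [IsReduced T] [IsLocalRing T]
    [Algebra O T] [Module.Finite O T] [Module.Flat O T]
    (lam : T →ₐ[O] O)
    {TE : Type*} [CommRing TE] [Algebra T TE] [Algebra O TE] [Algebra E TE]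
    [IsScalarTower O T TE] [IsScalarTower O E TE]
    [IsLocalization (Algebra.algebraMapSubmonoid T (nonZeroDivisors O)) TE]
    (lamE : TE →ₐ[E] E) (e : TE)
    (hlamE : ∀ t : T, lamE (algebraMap T TE t) = algebraMap O E (lam t))
    (he1 : lamE e = 1)
    (he2 : ∀ P : Ideal TE, P.IsPrime → P ≠ RingHom.ker lamE → e ∈ P)
    {T' : Type*} [CommRing T'] [IsReduced T'] [IsLocalRing T']
    [Algebra O T'] [Module.Finite O T'] [Module.Flat O T']
    (lam' : T' →ₐ[O] O)
    {TE' : Type*} [CommRing TE'] [Algebra T' TE'] [Algebra O TE'] [Algebra E TE']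
    [IsScalarTower O T' TE'] [IsScalarTower O E TE']
    [IsLocalization (Algebra.algebraMapSubmonoid T' (nonZeroDivisors O)) TE']
    (lamE' : TE' →ₐ[E] E) (e' : TE')
    (hlamE' : ∀ t : T', lamE' (algebraMap T' TE' t) = algebraMap O E (lam' t))
    (he1' : lamE' e' = 1)
    (he2' : ∀ P : Ideal TE', P.IsPrime → P ≠ RingHom.ker lamE' → e' ∈ P)
    {M₁ : Type*} [AddCommGroup M₁] [Module O M₁] [Module T M₁] [IsScalarTower O T M₁]
    [Module.Finite T M₁] [Module.Free O M₁]
    {ME₁ : Type*} [AddCommGroup ME₁] [Module O ME₁] [Module E ME₁] [Module TE ME₁]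
    [IsScalarTower O TE ME₁] [IsScalarTower O E ME₁] [IsScalarTower E TE ME₁]
    (iota₁ : M₁ →ₗ[O] ME₁) [IsLocalizedModule (nonZeroDivisors O) iota₁]
    (hiota₁ : ∀ (t : T) (m : M₁), iota₁ (t • m) = algebraMap T TE t • iota₁ m)
    {M₂ : Type*} [AddCommGroup M₂] [Module O M₂] [Module T' M₂] [IsScalarTower O T' M₂]
    [Module.Finite T' M₂] [Module.Free O M₂]
    {ME₂ : Type*} [AddCommGroup ME₂] [Module O ME₂] [Module E ME₂] [Module TE' ME₂]
    [IsScalarTower O TE' ME₂] [IsScalarTower O E ME₂] [IsScalarTower E TE' ME₂]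
    (iota₂ : M₂ →ₗ[O] ME₂) [IsLocalizedModule (nonZeroDivisors O) iota₂]
    (hiota₂ : ∀ (t : T') (m : M₂), iota₂ (t • m) = algebraMap T' TE' t • iota₂ m)
    (B : M₁ →ₗ[O] M₂ →ₗ[O] O)
    (hB : Function.Bijective B) (hBf : Function.Bijective B.flip)
    (BE : ME₁ →ₗ[E] ME₂ →ₗ[E] E)
    (hBE : ∀ (m : M₁) (m' : M₂), BE (iota₁ m) (iota₂ m') = algebraMap O E (B m m'))
    (horth₁ : ∀ (m : M₁) (m' : M₂), BE (e • iota₁ m) ((1 - e') • iota₂ m') = 0)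
    (horth₂ : ∀ (m : M₁) (m' : M₂), BE ((1 - e) • iota₁ m) (e' • iota₂ m') = 0)
    (δ₁ : M₁) (δ₂ : M₂)
    (hδ₁ : ∀ t : T, lam t = 0 → t • δ₁ = 0)
    (hδ₁basis : ∀ m : M₁, (∀ t : T, lam t = 0 → t • m = 0) → ∃! c : O, m = c • δ₁)
    (hδ₂ : ∀ t : T', lam' t = 0 → t • δ₂ = 0)
    (hδ₂basis : ∀ m : M₂, (∀ t : T', lam' t = 0 → t • m = 0) → ∃! c : O, m = c • δ₂) :
    fittingIdeal O (C0M e iota₁) = fittingIdeal O (C0M e' iota₂) ∧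
    fittingIdeal O (C0M e iota₁) = Ideal.span {B δ₁ δ₂} :=
  statement11_general lam lamE e hlamE he1 he2 lam' lamE' e' hlamE' he1' he2' iota₁ hiota₁ iota₂
    hiota₂ B hB hBf BE hBE horth₁ horth₂ δ₁ δ₂ hδ₁ hδ₁basis hδ₂ hδ₂basis
end
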